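/- arXiv:1112.4100 — 7 statements merged into one kernel-verified Lean document; each statement's English description precedes it below -/
import Mathlib

section
/- Let h: ℝ^d → (0,∞) be differentiable with |∇h(x)| ≤ 1/(16√d) for all x, and fix a unit vector y ∈ B(0,1). Then the map Φ(x) = x + h(x)y is a diffeomorphism-like change of variables whose Jacobian determinant is bounded below by a positive constant depending only on d; consequently, for any measurable Q ⊂ ℝ^d, p ≥ 1, and u ∈ L^p(Q_h) with Q_h = ∪_{x∈Q} B(x,h(x)), one has ∫_Q |u(x + h(x)y)|^p dx ≤ C ‖u‖^p_{L^p(Q_h)}. -/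
/-!
Since `h` is `1/16`-Lipschitz and `‖y‖ ≤ 1`, the map `Φ x = x + h x • y` is injective and its
Jacobian determinant `1 + ∇h(x) ⬝ y` is at least `15/16`, so the change of variables formula bounds
`∫_Q |u ∘ Φ|^p` by `16/15 ∫_{Φ(Q)} |u|^p`. Up to a null set, `Φ(Q) ⊆ Q_h`: if `x ∈ Q` but
`Φ x ∉ Q_h`, then `x + s • y ∉ Q` for `0 < s < h x`, because `Φ x` lies in the ball of radius
`h (x + s • y)` around that point. Hence every line in direction `y` meets the exceptional set in
points isolated from the right, i.e. in a countable set, and disintegrating Lebesgue measure along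
these lines shows that the exceptional set is null.
-/

open MeasureTheory Set Metric Function
open scoped NNReal ENNReal

theorem countable_of_isolated_right_within {α : Type*} [TopologicalSpace α] [LinearOrder α]
    [OrderTopology α] [SecondCountableTopology α] {s : Set α}
    (h : ∀ x ∈ s, ∃ z, x < z ∧ Ioo x z ∩ s = ∅) : s.Countable := by
  refine (countable_image_lt_image_Ioi_within s id).mono fun x hx ↦ ?_
  obtain ⟨z, hxz, hgap⟩ := h x hx
  exact ⟨hx, z, hxz, fun t ht hxt ↦ not_lt.1 fun htz ↦ hgap.subset ⟨⟨hxt, htz⟩, ht⟩⟩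

theorem LinearMap.det_id_add_smulRight {R M : Type*} [CommRing R] [AddCommGroup M] [Module R M]
    [Module.Free R M] [Module.Finite R M] (f : M →ₗ[R] R) (v : M) :
    LinearMap.det (LinearMap.id + f.smulRight v) = 1 + f v := by
  classical
  let b := Module.Free.chooseBasis R M
  have hM : LinearMap.toMatrix b b (LinearMap.id + f.smulRight v) =
      1 + Matrix.replicateCol Unit (b.repr v) * Matrix.replicateRow Unit (fun j ↦ f (b j)) := by
    ext i j
    simp [LinearMap.toMatrix_apply, Matrix.mul_apply, Matrix.one_apply, Finsupp.single_apply,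
      eq_comm, mul_comm]
  rw [← LinearMap.det_toMatrix b, hM, Matrix.det_one_add_replicateCol_mul_replicateRow]
  conv_rhs => rw [← b.sum_repr v]
  simp only [dotProduct, map_sum, map_smul, smul_eq_mul, mul_comm]

theorem ContinuousLinearMap.det_id_add_smulRight {R M : Type*} [CommRing R] [TopologicalSpace R]
    [IsTopologicalRing R] [AddCommGroup M] [TopologicalSpace M] [IsTopologicalAddGroup M]
    [Module R M] [ContinuousSMul R M] [Module.Free R M] [Module.Finite R M]
    (f : M →L[R] R) (v : M) : (ContinuousLinearMap.id R M + f.smulRight v).det = 1 + f v :=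
  LinearMap.det_id_add_smulRight (f : M →ₗ[R] R) v

theorem one_sub_norm_mul_norm_le_abs_det_id_add_smulRight {E : Type*} [NormedAddCommGroup E]
    [NormedSpace ℝ E] [FiniteDimensional ℝ E] (f : E →L[ℝ] ℝ) (v : E) :
    1 - ‖f‖ * ‖v‖ ≤ |(ContinuousLinearMap.id ℝ E + f.smulRight v).det| := by
  rw [ContinuousLinearMap.det_id_add_smulRight]
  have := neg_le_of_abs_le ((f.le_opNorm v).trans_eq' (Real.norm_eq_abs _).symm)
  linarith [le_abs_self (1 + f v)]

theorem MeasureTheory.Measure.addHaar_eq_zero_of_isolated_right_along {E : Type*}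
    [NormedAddCommGroup E] [NormedSpace ℝ E] [FiniteDimensional ℝ E] [MeasurableSpace E]
    [BorelSpace E] (μ : Measure E) [μ.IsAddHaarMeasure] {s : Set E} (hs : MeasurableSet s)
    (v : E) (h : ∀ x ∈ s, ∃ δ : ℝ, 0 < δ ∧ ∀ t ∈ Ioo 0 δ, x + t • v ∉ s) : μ s = 0 := by
  rw [measure_eq_zero_iff_ae_notMem]
  refine ae_mem_of_ae_add_linearMap_mem (LinearMap.toSpanSingleton ℝ E v) volume μ hs.compl
    fun p ↦ measure_eq_zero_iff_ae_notMem.1 (Set.Countable.measure_zero ?_ _)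
  refine countable_of_isolated_right_within fun t ht ↦ ?_
  obtain ⟨δ, hδ, hgap⟩ := h _ ht
  refine ⟨t + δ, by linarith, eq_empty_of_forall_notMem fun t' ⟨ht', ht's⟩ ↦ ?_⟩
  refine hgap (t' - t) ⟨by linarith [ht'.1], by linarith [ht'.2]⟩ ?_
  have ht's : p + t' • v ∈ s := ht's
  simpa [add_assoc, ← add_smul] using ht's

section VariableShift

variable {E : Type*} [NormedAddCommGroup E] [NormedSpace ℝ E] {h : E → ℝ} {K : ℝ≥0} {y : E}

theorem LipschitzWith.smul_const_of_norm_le_one (hh : LipschitzWith K h) (hy : ‖y‖ ≤ 1) :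
    LipschitzWith K fun x ↦ h x • y :=
  LipschitzWith.of_dist_le_mul fun a b ↦
    calc dist (h a • y) (h b • y) = dist (h a) (h b) * ‖y‖ := by
          rw [dist_eq_norm, ← sub_smul, norm_smul, ← dist_eq_norm]
      _ ≤ dist (h a) (h b) := mul_le_of_le_one_right dist_nonneg hy
      _ ≤ K * dist a b := hh.dist_le_mul a b

theorem LipschitzWith.injective_add_smul (hh : LipschitzWith K h) (hK : K < 1) (hy : ‖y‖ ≤ 1) :
    Injective fun x ↦ x + h x • y :=
  (AntilipschitzWith.id.add_lipschitzWith (hh.smul_const_of_norm_le_one hy)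
    (by simpa using hK)).injective

theorem LipschitzWith.add_smul_mem_ball (hh : LipschitzWith K h) (hK : K < 1) (hy : ‖y‖ ≤ 1)
    {x : E} {s : ℝ} (hs : s ∈ Ioo 0 (h x)) : x + h x • y ∈ ball (x + s • y) (h (x + s • y)) := by
  have hdist : dist (x + h x • y) (x + s • y) = (h x - s) * ‖y‖ := by
    rw [dist_add_left, dist_eq_norm, ← sub_smul, norm_smul,
      Real.norm_of_nonneg (by linarith [hs.2])]
  have hlip : h x - K * (s * ‖y‖) ≤ h (x + s • y) := by
    have := hh.dist_le_mul (x + s • y) x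
    rw [dist_self_add_left, norm_smul, Real.norm_of_nonneg hs.1.le] at this
    linarith [neg_abs_le (h (x + s • y) - h x), (Real.dist_eq _ _).symm.trans_le this]
  have hKy : (K : ℝ) * ‖y‖ < 1 := by
    calc (K : ℝ) * ‖y‖ ≤ K := mul_le_of_le_one_right K.2 hy
      _ < 1 := by exact_mod_cast hK
  rw [mem_ball, hdist]
  nlinarith [mul_nonneg (sub_nonneg.2 hs.2.le) (sub_nonneg.2 hy), hs.1]

variable [FiniteDimensional ℝ E] [MeasurableSpace E] [BorelSpace E] (μ : Measure E)
  [μ.IsAddHaarMeasure] {Q : Set E}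

theorem LipschitzWith.addHaar_diff_preimage_biUnion_ball_eq_zero (hh : LipschitzWith K h)
    (hK : K < 1) (hy : ‖y‖ ≤ 1) (hpos : ∀ x ∈ Q, 0 < h x) (hQ : MeasurableSet Q) :
    μ (Q \ (fun x ↦ x + h x • y) ⁻¹' ⋃ z ∈ Q, ball z (h z)) = 0 := by
  have hcont : Continuous fun x ↦ x + h x • y :=
    continuous_id.add (hh.smul_const_of_norm_le_one hy).continuous
  refine μ.addHaar_eq_zero_of_isolated_right_along
    (hQ.diff ((isOpen_biUnion fun _ _ ↦ isOpen_ball).measurableSet.preimage hcont.measurable)) y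
    fun x ⟨hxQ, hx⟩ ↦ ⟨h x, hpos x hxQ, fun s hs ⟨hsQ, _⟩ ↦ hx ?_⟩
  exact mem_biUnion hsQ (hh.add_smul_mem_ball hK hy hs)

theorem lintegral_comp_add_smul_le_lintegral_biUnion_ball (hd : Differentiable ℝ h)
    (hh' : ∀ x, ‖fderiv ℝ h x‖₊ ≤ K) (hK : K < 1) (hy : ‖y‖ ≤ 1) (hpos : ∀ x ∈ Q, 0 < h x)
    (hQ : MeasurableSet Q) (g : E → ℝ≥0∞) :
    ∫⁻ x in Q, g (x + h x • y) ∂μ ≤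
      ENNReal.ofReal (1 - K)⁻¹ * ∫⁻ x in ⋃ z ∈ Q, ball z (h z), g x ∂μ := by
  set Φ : E → E := fun x ↦ x + h x • y
  set Φ' : E → E →L[ℝ] E := fun x ↦ ContinuousLinearMap.id ℝ E + (fderiv ℝ h x).smulRight y
  have hΦ' : ∀ x, HasFDerivAt Φ (Φ' x) x := fun x ↦
    (hasFDerivAt_id x).add ((hd x).hasFDerivAt.smul_const y)
  have hlip : LipschitzWith K h := lipschitzWith_of_nnnorm_fderiv_le hd hh'
  have hdet (x : E) : 1 - K ≤ |(Φ' x).det| :=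
    calc (1 : ℝ) - K ≤ 1 - ‖fderiv ℝ h x‖ * ‖y‖ := by
          gcongr; exact (mul_le_of_le_one_right (norm_nonneg _) hy).trans (by exact_mod_cast hh' x)
      _ ≤ |(Φ' x).det| := one_sub_norm_mul_norm_le_abs_det_id_add_smulRight _ _
  have hK' : (0 : ℝ) < 1 - K := sub_pos.2 (by exact_mod_cast hK)
  have himage : Φ '' Q ≤ᵐ[μ] ⋃ z ∈ Q, ball z (h z) := by
    refine ae_le_set.2 (measure_mono_null ?_
      (addHaar_image_eq_zero_of_differentiableOn_of_addHaar_eq_zero μ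
        (fun x _ ↦ (hΦ' x).differentiableAt.differentiableWithinAt)
        (hlip.addHaar_diff_preimage_biUnion_ball_eq_zero μ hK hy hpos hQ)))
    rintro _ ⟨⟨x, hxQ, rfl⟩, hx⟩
    exact ⟨x, ⟨hxQ, hx⟩, rfl⟩
  calc ∫⁻ x in Q, g (Φ x) ∂μ
      ≤ ∫⁻ x in Q, ENNReal.ofReal (1 - K)⁻¹ * (ENNReal.ofReal |(Φ' x).det| * g (Φ x)) ∂μ := by
        refine lintegral_mono fun x ↦ le_mul_of_one_le_left' ?_ |>.trans_eq (mul_assoc _ _ _)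
        rw [← ENNReal.ofReal_mul (inv_nonneg.2 hK'.le), ENNReal.one_le_ofReal,
          le_inv_mul_iff₀ hK', mul_one]
        exact hdet x
    _ = ENNReal.ofReal (1 - K)⁻¹ * ∫⁻ x in Φ '' Q, g x ∂μ := by
        rw [lintegral_const_mul' _ _ ENNReal.ofReal_ne_top,
          lintegral_image_eq_lintegral_abs_det_fderiv_mul μ hQ
            (fun x _ ↦ (hΦ' x).hasFDerivWithinAt) (hlip.injective_add_smul hK hy).injOn]
    _ ≤ ENNReal.ofReal (1 - K)⁻¹ * ∫⁻ x in ⋃ z ∈ Q, ball z (h z), g x ∂μ :=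
        mul_le_mul_right (lintegral_mono_set' himage) _

end VariableShift

/-- Variable-radius change of variables estimate: there is `C > 0` depending
only on `d` such that for every differentiable sizing function `h : ℝ^d → (0,∞)` with
`|∇h| ≤ 1/(16√d)`, every `y` with `‖y‖ ≤ 1`, every measurable `Q`, every `p ≥ 1` and every
measurable `u`, `∫_Q |u(x + h(x)y)|^p dx ≤ C ‖u‖_{L^p(Q_h)}^p`, where
`Q_h = ⋃_{x ∈ Q} B(x, h(x))`. -/
theorem stmt5 {d : ℕ} :
    ∃ C : ℝ, 0 < C ∧
      ∀ h : EuclideanSpace ℝ (Fin d) → ℝ, (∀ x, 0 < h x) → Differentiable ℝ h →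
        (∀ x, ‖fderiv ℝ h x‖ ≤ 1 / (16 * Real.sqrt d)) →
        ∀ y : EuclideanSpace ℝ (Fin d), ‖y‖ ≤ 1 →
        ∀ Q : Set (EuclideanSpace ℝ (Fin d)), MeasurableSet Q →
        ∀ p : ℝ, 1 ≤ p →
        ∀ u : EuclideanSpace ℝ (Fin d) → ℝ, Measurable u →
          ∫⁻ x in Q, ENNReal.ofReal (|u (x + h x • y)| ^ p) ≤
            ENNReal.ofReal C *
              ∫⁻ x in (⋃ z ∈ Q, Metric.ball z (h z)), ENNReal.ofReal (|u x| ^ p) := by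
  refine ⟨(1 - ((16⁻¹ : ℝ≥0) : ℝ))⁻¹, by norm_num, ?_⟩
  intro h hpos hd hgrad y hy Q hQ p _ u _
  -- for `d = 0` the bound reads `‖fderiv ℝ h x‖ ≤ 1 / 0 = 0`
  have hsqrt : 1 / (16 * Real.sqrt d) ≤ 16⁻¹ := by
    rcases Nat.eq_zero_or_pos d with rfl | hd0
    · norm_num
    · rw [one_div]
      exact inv_anti₀ (by norm_num) (le_mul_of_one_le_right (by norm_num)
        (Real.one_le_sqrt.2 (by exact_mod_cast hd0)))
  have hh' (x : EuclideanSpace ℝ (Fin d)) : ‖fderiv ℝ h x‖₊ ≤ 16⁻¹ := by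
    rw [← NNReal.coe_le_coe, coe_nnnorm, NNReal.coe_inv]
    exact_mod_cast (hgrad x).trans hsqrt
  exact lintegral_comp_add_smul_le_lintegral_biUnion_ball volume hd hh' (by norm_num) hy
    (fun x _ ↦ hpos x) hQ fun x ↦ ENNReal.ofReal (|u x| ^ p)
end

section
/- Let h: ℝ^d → (0,∞) satisfy |∇h| ≤ 1/(16√d) and let 𝒬 be the set of cubes produced by the quadtree-style Algorithm (repeatedly splitting any cube Q_i with size(Q_i) > 8 max_{x∈Q_i} h(x) into 2^d half-size children, keeping those that intersect Ω, starting from a cube of size > 4 max_Ω h). Then any two intersecting cubes Q_i, Q_j ∈ 𝒬 satisfy size(Q_i) ≤ 2 size(Q_j) (2:1 balance). -/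
open MeasureTheory

/-- An axis-aligned cube in `ℝ^d`, given by its center and its side length (its size). -/
structure Cube (d : ℕ) where
  center : EuclideanSpace ℝ (Fin d)
  size : ℝ

/-- The set of points of a cube. -/
def Cube.toSet {d : ℕ} (Q : Cube d) : Set (EuclideanSpace ℝ (Fin d)) :=
  {x | ∀ i, |x i - Q.center i| ≤ Q.size / 2}

/-!
Suppose `Q` meets `Q'` at `x` and `size Q > 2 size Q'`; the sizes are dyadic, so
`size Q ≥ 4 size Q'`. Since `Q'` was produced by a split, `h x < size Q' / 4 ≤ size Q / 16`.
A cube of size `s` has Euclidean diameter `√d s`, so the gradient bound makes `h` vary by at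
most `s / 16` on it, and `h < size Q / 8` on all of `Q`: then `Q` would have been split.
-/

theorem EuclideanSpace.norm_le_sqrt_card_mul {d : ℕ} {v : EuclideanSpace ℝ (Fin d)} {s : ℝ}
    (hs : 0 ≤ s) (hv : ∀ i, |v i| ≤ s) : ‖v‖ ≤ √d * s := by
  have hsum : ∑ i, ‖v i‖ ^ 2 ≤ ∑ _i : Fin d, s ^ 2 :=
    Finset.sum_le_sum fun i _ => pow_le_pow_left₀ (norm_nonneg _) (hv i) 2
  calc ‖v‖ = √(∑ i, ‖v i‖ ^ 2) := EuclideanSpace.norm_eq v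
    _ ≤ √(d * s ^ 2) := by simpa using Real.sqrt_le_sqrt hsum
    _ = √d * s := by rw [Real.sqrt_mul d.cast_nonneg, Real.sqrt_sq hs]

theorem Cube.norm_sub_le_sqrt_mul_size {d : ℕ} {Q : Cube d} (hQ : 0 ≤ Q.size)
    {x y : EuclideanSpace ℝ (Fin d)} (hx : x ∈ Q.toSet) (hy : y ∈ Q.toSet) :
    ‖y - x‖ ≤ √d * Q.size := by
  refine EuclideanSpace.norm_le_sqrt_card_mul hQ fun i => ?_
  calc |y i - x i| = |(y i - Q.center i) - (x i - Q.center i)| := by ring_nf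
    _ ≤ |y i - Q.center i| + |x i - Q.center i| := abs_sub _ _
    _ ≤ Q.size := by linarith [hx i, hy i]

theorem Cube.apply_le_add_mul_size_of_norm_fderiv_le {d : ℕ} {h : EuclideanSpace ℝ (Fin d) → ℝ}
    {c : ℝ} (hdiff : Differentiable ℝ h) (hgrad : ∀ x, ‖fderiv ℝ h x‖ ≤ c / √d) (hc : 0 ≤ c)
    {Q : Cube d} (hQ : 0 ≤ Q.size) {x y : EuclideanSpace ℝ (Fin d)}
    (hx : x ∈ Q.toSet) (hy : y ∈ Q.toSet) : h y ≤ h x + c * Q.size := by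
  have hlip : ‖h y - h x‖ ≤ c / √d * ‖y - x‖ :=
    convex_univ.norm_image_sub_le_of_norm_fderiv_le (fun z _ => hdiff z) (fun z _ => hgrad z)
      (Set.mem_univ x) (Set.mem_univ y)
  have hvar : c / √d * ‖y - x‖ ≤ c * Q.size := by
    rcases (Real.sqrt_nonneg d).eq_or_lt with hd | hd
    · simpa [← hd] using mul_nonneg hc hQ
    · calc c / √d * ‖y - x‖ ≤ c / √d * (√d * Q.size) := by
            gcongr; exact Cube.norm_sub_le_sqrt_mul_size hQ hx hy
        _ = c * Q.size := by field_simp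
  linarith [le_abs_self (h y - h x), Real.norm_eq_abs (h y - h x)]

theorem four_mul_le_of_eq_two_zpow_mul {a b : ℝ} (hb : 0 < b) {m : ℤ} (hm : a = 2 ^ m * b)
    (hab : 2 * b < a) : 4 * b ≤ a := by
  have hm1 : 1 < m := by
    rw [hm] at hab
    exact (zpow_lt_zpow_iff_right₀ one_lt_two).mp (by simpa using lt_of_mul_lt_mul_right hab hb.le)
  have h4 : (4 : ℝ) ≤ 2 ^ m :=
    calc (4 : ℝ) = 2 ^ (2 : ℤ) := by norm_num
      _ ≤ 2 ^ m := zpow_le_zpow_right₀ one_le_two (by omega)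
  rw [hm]
  exact mul_le_mul_of_nonneg_right h4 hb.le

theorem stmt6_general {d : ℕ} (h : EuclideanSpace ℝ (Fin d) → ℝ)
    (hdiff : Differentiable ℝ h)
    (hgrad : ∀ x, ‖fderiv ℝ h x‖ ≤ 1 / (16 * Real.sqrt d))
    (𝒬 : Set (Cube d))
    (hdyadic : ∀ Q ∈ 𝒬, ∀ Q' ∈ 𝒬, ∃ m : ℤ, Q.size = 2 ^ m * Q'.size)
    (hparent_split : ∀ Q ∈ 𝒬, ∀ x ∈ Q.toSet, 4 * h x < Q.size)
    (hnot_split : ∀ Q ∈ 𝒬, ∃ x ∈ Q.toSet, Q.size ≤ 8 * h x) :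
    ∀ Q ∈ 𝒬, ∀ Q' ∈ 𝒬, (Q.toSet ∩ Q'.toSet).Nonempty → Q.size ≤ 2 * Q'.size := by
  have hsize_pos : ∀ Q ∈ 𝒬, 0 < Q.size := fun Q hQ => by
    obtain ⟨y, hyQ, hy⟩ := hnot_split Q hQ
    linarith [hparent_split Q hQ y hyQ]
  intro Q hQ Q' hQ' ⟨x, hxQ, hxQ'⟩
  by_contra! hbig
  obtain ⟨m, hm⟩ := hdyadic Q hQ Q' hQ'
  have hquarter := four_mul_le_of_eq_two_zpow_mul (hsize_pos Q' hQ') hm hbig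
  obtain ⟨y, hyQ, hy⟩ := hnot_split Q hQ
  have hvar : h y ≤ h x + 1 / 16 * Q.size :=
    Cube.apply_le_add_mul_size_of_norm_fderiv_le hdiff
      (fun z => (hgrad z).trans_eq (div_div 1 16 √d).symm) (by norm_num) (hsize_pos Q hQ).le hxQ hyQ
  linarith [hparent_split Q' hQ' x hxQ']

/-- **2:1 balance.** Let `h : ℝ^d → (0,∞)` satisfy `|∇h| ≤ 1/(16√d)` and let `𝒬`
be the set of cubes produced by the quadtree-style algorithm.  The algorithm output is
characterized by: all cubes are dyadic descendants of a common root (any two sizes differ by a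
power of two), every cube `Q ∈ 𝒬` arose from splitting its parent (or the root condition), so
`h(x) < size(Q)/4` on `Q`, and no cube of `𝒬` is itself eligible for splitting, so
`size(Q) ≤ 8 max_{x ∈ Q} h(x)`.  Then any two intersecting cubes `Q, Q' ∈ 𝒬` satisfy
`size(Q) ≤ 2 size(Q')`. -/
theorem stmt6 {d : ℕ} (h : EuclideanSpace ℝ (Fin d) → ℝ)
    (hpos : ∀ x, 0 < h x) (hdiff : Differentiable ℝ h)
    (hgrad : ∀ x, ‖fderiv ℝ h x‖ ≤ 1 / (16 * Real.sqrt d))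
    (𝒬 : Set (Cube d))
    (hsize : ∀ Q ∈ 𝒬, 0 < Q.size)
    (hdyadic : ∀ Q ∈ 𝒬, ∀ Q' ∈ 𝒬, ∃ m : ℤ, Q.size = 2 ^ m * Q'.size)
    (hparent_split : ∀ Q ∈ 𝒬, ∀ x ∈ Q.toSet, 4 * h x < Q.size)
    (hnot_split : ∀ Q ∈ 𝒬, ∃ x ∈ Q.toSet, Q.size ≤ 8 * h x) :
    ∀ Q ∈ 𝒬, ∀ Q' ∈ 𝒬, (Q.toSet ∩ Q'.toSet).Nonempty → Q.size ≤ 2 * Q'.size :=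
  stmt6_general h hdiff hgrad 𝒬 hdyadic hparent_split hnot_split
end

section
/- Let h: ℝ^d → (0,∞) satisfy |∇h| ≤ 1/(16√d), and let 𝒬 be the output of the dyadic cube-splitting algorithm (split Q whenever size(Q) > 8 max_{x∈Q} h(x)). Then every cube Q ∈ 𝒬 satisfies 4 h(x) ≤ size(Q) ≤ 16 h(x) for all x ∈ Q. -/
open MeasureTheory

/-!
The upper bound `4 h ≤ size(Q)` is exactly the splitting of the parent. For the lower bound, the
cube is not split, so `size(Q) ≤ 8 h(y)` at some `y ∈ Q`; since `diam Q = √d size(Q)`, the gradient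
bound lets `h` drop by at most `size(Q)/16` across `Q`, so `h ≥ size(Q)/8 - size(Q)/16` on `Q`.
-/

theorem EuclideanSpace.norm_le_sqrt_card_mul_s7 {ι : Type*} [Fintype ι] {x : EuclideanSpace ℝ ι}
    {r : ℝ} (hr : 0 ≤ r) (hx : ∀ i, ‖x i‖ ≤ r) : ‖x‖ ≤ √(Fintype.card ι) * r := by
  calc ‖x‖ = √(∑ i, ‖x i‖ ^ 2) := EuclideanSpace.norm_eq x
    _ ≤ √(∑ _ : ι, r ^ 2) := by gcongr with i; exact hx i
    _ = √(Fintype.card ι) * r := by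
      rw [Finset.sum_const, Finset.card_univ, nsmul_eq_mul, Real.sqrt_mul (Nat.cast_nonneg _),
        Real.sqrt_sq hr]

namespace Cube

variable {d : ℕ} {Q : Cube d} {x y : EuclideanSpace ℝ (Fin d)}

theorem abs_sub_apply_le_size (hx : x ∈ Q.toSet) (hy : y ∈ Q.toSet) (i : Fin d) :
    |x i - y i| ≤ Q.size := by
  calc |x i - y i| = |(x i - Q.center i) - (y i - Q.center i)| := by ring_nf
    _ ≤ |x i - Q.center i| + |y i - Q.center i| := abs_sub _ _
    _ ≤ Q.size := by linarith [hx i, hy i]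

theorem norm_sub_le_sqrt_mul_size_s7 (hQ : 0 ≤ Q.size) (hx : x ∈ Q.toSet) (hy : y ∈ Q.toSet) :
    ‖x - y‖ ≤ √d * Q.size := by
  simpa using EuclideanSpace.norm_le_sqrt_card_mul_s7 (x := x - y) hQ fun i ↦ by
    simpa only [PiLp.sub_apply, Real.norm_eq_abs] using abs_sub_apply_le_size hx hy i

theorem abs_sub_le_of_norm_fderiv_le {f : EuclideanSpace ℝ (Fin d) → ℝ}
    (hf : Differentiable ℝ f) {L : ℝ} (hL : ∀ z, ‖fderiv ℝ f z‖ ≤ L) (hQ : 0 ≤ Q.size)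
    (hx : x ∈ Q.toSet) (hy : y ∈ Q.toSet) : |f x - f y| ≤ L * (√d * Q.size) := by
  calc |f x - f y| ≤ L * ‖x - y‖ :=
        Convex.norm_image_sub_le_of_norm_fderiv_le (fun z _ ↦ hf z) (fun z _ ↦ hL z)
          convex_univ (Set.mem_univ y) (Set.mem_univ x)
    _ ≤ L * (√d * Q.size) :=
        mul_le_mul_of_nonneg_left (norm_sub_le_sqrt_mul_size_s7 hQ hx hy)
          ((norm_nonneg _).trans (hL x))

theorem abs_sub_le_size_div_sixteen {f : EuclideanSpace ℝ (Fin d) → ℝ}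
    (hf : Differentiable ℝ f) (hgrad : ∀ z, ‖fderiv ℝ f z‖ ≤ 1 / (16 * √d)) (hQ : 0 ≤ Q.size)
    (hx : x ∈ Q.toSet) (hy : y ∈ Q.toSet) : |f x - f y| ≤ Q.size / 16 := by
  refine (abs_sub_le_of_norm_fderiv_le hf hgrad hQ hx hy).trans ?_
  -- for `d = 0` the gradient bound is the junk value `1 / (16 * √0) = 0`
  rcases (Real.sqrt_nonneg (d : ℝ)).eq_or_lt with hd | hd
  · simpa [← hd] using div_nonneg hQ (by norm_num : (0 : ℝ) ≤ 16)
  · exact le_of_eq (by field_simp)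

end Cube

theorem stmt7_general {d : ℕ} (h : EuclideanSpace ℝ (Fin d) → ℝ)
    (hdiff : Differentiable ℝ h)
    (hgrad : ∀ x, ‖fderiv ℝ h x‖ ≤ 1 / (16 * Real.sqrt d))
    (𝒬 : Set (Cube d))
    (hsize : ∀ Q ∈ 𝒬, 0 < Q.size)
    (hparent_split : ∀ Q ∈ 𝒬, ∀ x ∈ Q.toSet, 8 * h x < 2 * Q.size)
    (hnot_split : ∀ Q ∈ 𝒬, ∃ x ∈ Q.toSet, Q.size ≤ 8 * h x) :
    ∀ Q ∈ 𝒬, ∀ x ∈ Q.toSet, 4 * h x ≤ Q.size ∧ Q.size ≤ 16 * h x := by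
  intro Q hQ x hx
  obtain ⟨y, hy, hy_not_split⟩ := hnot_split Q hQ
  have hxy := abs_le.mp (Cube.abs_sub_le_size_div_sixteen hdiff hgrad (hsize Q hQ).le hx hy)
  have hx_split := hparent_split Q hQ x hx
  constructor <;> linarith [hxy.1]

/-- Let `h : ℝ^d → (0,∞)` satisfy `|∇h| ≤ 1/(16√d)`, and let `𝒬` be the output
of the dyadic cube-splitting algorithm.  The output is characterized by: every cube `Q ∈ 𝒬`
arose from splitting its parent `Q̂` (or the root condition), so `2 size(Q) = size(Q̂) >
8 max_{Q̂} h ≥ 8 h(x)` for `x ∈ Q`; and `Q` itself is not split, so some `x ∈ Q` has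
`size(Q) ≤ 8 h(x)`.  Then every `Q ∈ 𝒬` satisfies `4 h(x) ≤ size(Q) ≤ 16 h(x)` for all
`x ∈ Q`. -/
theorem stmt7 {d : ℕ} (h : EuclideanSpace ℝ (Fin d) → ℝ)
    (hpos : ∀ x, 0 < h x) (hdiff : Differentiable ℝ h)
    (hgrad : ∀ x, ‖fderiv ℝ h x‖ ≤ 1 / (16 * Real.sqrt d))
    (𝒬 : Set (Cube d))
    (hsize : ∀ Q ∈ 𝒬, 0 < Q.size)
    (hparent_split : ∀ Q ∈ 𝒬, ∀ x ∈ Q.toSet, 8 * h x < 2 * Q.size)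
    (hnot_split : ∀ Q ∈ 𝒬, ∃ x ∈ Q.toSet, Q.size ≤ 8 * h x) :
    ∀ Q ∈ 𝒬, ∀ x ∈ Q.toSet, 4 * h x ≤ Q.size ∧ Q.size ≤ 16 * h x :=
  stmt7_general h hdiff hgrad 𝒬 hsize hparent_split hnot_split
end

section
/- Let K be a simplex in ℝ^d with unit edge-direction vectors {u_i}, and define the coplanarity θ_K = max_{|ξ|=1} min_i arccos(ξ · u_i). For a triangle in ℝ^2, θ_K equals half of the largest angle of the triangle. -/
/-!
Parametrise unit vectors as `(cos φ, sin φ)`. The angle between `ξ` and the line of an edge of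
polar angle `θ` is then `arccos |cos (φ - θ)|`, the distance from `φ - θ` to `πℤ`. Measured from
the first edge, the three edge lines have directions `0`, `±A` and `±(A + C)` modulo `π`, the sign
being the orientation of the triangle, so they cut the circle `ℝ / πℤ` of line directions into
arcs of lengths `A`, `C` and `B = π - A - C`. A direction is at distance at least `δ` from all
three lines iff it lies in one of these arcs at distance at least `δ` from both of its ends, so
the best `δ` is half the longest arc, attained by the bisector of the largest angle.
-/

open Real
open scoped RealInnerProductSpace

/-- The angle between two lines in the plane whose directions differ by `x`. -/
noncomputable def lineAngle (x : ℝ) : ℝ := arccos |cos x|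

theorem lineAngle_neg (x : ℝ) : lineAngle (-x) = lineAngle x := by
  simp [lineAngle]

theorem lineAngle_add_int_mul_pi (x : ℝ) (k : ℤ) : lineAngle (x + k * π) = lineAngle x := by
  have h : Function.Periodic lineAngle π := fun x => by simp [lineAngle, cos_add_pi]
  simpa using h.int_mul k x

theorem lineAngle_sign_mul {ε : ℝ} (hε : ε = 1 ∨ ε = -1) (x : ℝ) :
    lineAngle (ε * x) = lineAngle x := by
  rcases hε with rfl | rfl
  · rw [one_mul]
  · rw [neg_one_mul, lineAngle_neg]

theorem lineAngle_le_abs (x : ℝ) : lineAngle x ≤ |x| := by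
  rcases le_or_gt |x| (π / 2) with hx | hx
  · have hcos : 0 ≤ cos |x| := cos_nonneg_of_mem_Icc ⟨by linarith [abs_nonneg x], hx⟩
    rw [lineAngle, ← cos_abs, abs_of_nonneg hcos, arccos_cos (abs_nonneg x) (by linarith [pi_pos])]
  · exact (arccos_le_pi_div_two.2 (abs_nonneg _)).trans hx.le

theorem lineAngle_le_abs_sub_int_mul_pi (x : ℝ) (k : ℤ) : lineAngle x ≤ |x - k * π| :=
  calc lineAngle x = lineAngle (x + ((-k : ℤ) : ℝ) * π) := (lineAngle_add_int_mul_pi x _).symm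
    _ ≤ |x - k * π| := by simpa [sub_eq_add_neg] using lineAngle_le_abs _

theorem le_lineAngle {d x : ℝ} (hd : 0 ≤ d) (hdx : d ≤ x) (hxd : x ≤ π - d) :
    d ≤ lineAngle x := by
  have hneg : cos (π - x) ≤ cos d := cos_le_cos_of_nonneg_of_le_pi hd (by linarith) (by linarith)
  have hcos : |cos x| ≤ cos d := abs_le.2
    ⟨by linarith [cos_pi_sub x], cos_le_cos_of_nonneg_of_le_pi hd (by linarith) hdx⟩
  calc d = arccos (cos d) := (arccos_cos hd (by linarith)).symm
    _ ≤ lineAngle x := arccos_le_arccos hcos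

section ThreeLines

variable {α β γ : ℝ}

theorem min_lineAngle_le (hsum : α + β + γ = π) (s : ℝ) :
    min (lineAngle s) (min (lineAngle (s - α)) (lineAngle (s - α - γ))) ≤
      max α (max β γ) / 2 := by
  set k := ⌊s / π⌋
  have h0 : 0 ≤ s - k * π := Int.sub_floor_div_mul_nonneg s pi_pos
  have h1 : s - k * π < π := Int.sub_floor_div_mul_lt s pi_pos
  have e0 := lineAngle_le_abs_sub_int_mul_pi s k
  have e1 := lineAngle_le_abs_sub_int_mul_pi (s - α) k
  have e2 := lineAngle_le_abs_sub_int_mul_pi (s - α - γ) k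
  have e3 := lineAngle_le_abs_sub_int_mul_pi s (k + 1)
  push_cast at e3
  have hαM : α ≤ max α (max β γ) := le_max_left _ _
  have hβM : β ≤ max α (max β γ) := (le_max_left _ _).trans (le_max_right _ _)
  have hγM : γ ≤ max α (max β γ) := (le_max_right _ _).trans (le_max_right _ _)
  simp only [min_le_iff]
  -- `s - kπ ∈ [0, π)` is within half an arc of the nearest of the directions `0, α, α + γ, π`.
  rcases le_total (s - k * π) (α / 2) with h | h
  · exact .inl (e0.trans (abs_le.2 ⟨by linarith, by linarith⟩))
  rcases le_total (s - k * π) (α + γ / 2) with h' | h'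
  · exact .inr (.inl (e1.trans (abs_le.2 ⟨by linarith, by linarith⟩)))
  rcases le_total (s - k * π) (α + γ + β / 2) with h'' | h''
  · exact .inr (.inr (e2.trans (abs_le.2 ⟨by linarith, by linarith⟩)))
  · exact .inl (e3.trans (abs_le.2 ⟨by linarith, by linarith⟩))

theorem exists_le_min_lineAngle (hα : 0 ≤ α) (hβ : 0 ≤ β) (hγ : 0 ≤ γ)
    (hsum : α + β + γ = π) :
    ∃ s, max α (max β γ) / 2 ≤
      min (lineAngle s) (min (lineAngle (s - α)) (lineAngle (s - α - γ))) := by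
  simp only [le_min_iff]
  rcases max_cases α (max β γ) with ⟨hM, hαM⟩ | ⟨hM, hαM⟩
  · refine ⟨α / 2, ?_, ?_, ?_⟩ <;> rw [hM]
    · exact le_lineAngle (by linarith) le_rfl (by linarith)
    · rw [show α / 2 - α = -(α / 2) by ring, lineAngle_neg]
      exact le_lineAngle (by linarith) le_rfl (by linarith)
    · rw [show α / 2 - α - γ = -(α / 2 + γ) by ring, lineAngle_neg]
      exact le_lineAngle (by linarith) (by linarith) (by linarith)
  rcases max_cases β γ with ⟨hM', hβγ⟩ | ⟨hM', hβγ⟩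
  · refine ⟨α + γ + β / 2, ?_, ?_, ?_⟩ <;> rw [hM, hM']
    · exact le_lineAngle (by linarith) (by linarith) (by linarith)
    · exact le_lineAngle (by linarith) (by linarith) (by linarith)
    · exact le_lineAngle (by linarith) (by linarith) (by linarith)
  · refine ⟨α + γ / 2, ?_, ?_, ?_⟩ <;> rw [hM, hM']
    · exact le_lineAngle (by linarith) (by linarith) (by linarith)
    · exact le_lineAngle (by linarith) (by linarith) (by linarith)
    · rw [show α + γ / 2 - α - γ = -(γ / 2) by ring, lineAngle_neg]
      exact le_lineAngle (by linarith) le_rfl (by linarith)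

end ThreeLines

theorem exists_sign_of_cos_eq {A C x y : ℝ} (hA : 0 < A) (hC : 0 < C) (hAC : A + C < π)
    (hx : cos x = cos A) (hy : cos y = cos (A + C)) (hxy : cos (y - x) = cos C) :
    ∃ ε : ℝ, (ε = 1 ∨ ε = -1) ∧ (∃ k : ℤ, x = ε * A + 2 * k * π) ∧
      ∃ m : ℤ, y = ε * (A + C) + 2 * m * π := by
  have not_int_mul_pi {z : ℝ} (h0 : 0 < z) (h1 : z < π) (n : ℤ) : z ≠ n * π := fun h =>
    (sin_pos_of_pos_of_lt_pi h0 h1).ne' (sin_eq_zero_iff.2 ⟨n, h.symm⟩)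
  obtain ⟨k, hk | hk⟩ := cos_eq_cos_iff.1 hx.symm <;>
    obtain ⟨m, hm | hm⟩ := cos_eq_cos_iff.1 hy.symm
  · exact ⟨1, .inl rfl, ⟨k, by linarith⟩, m, by linarith⟩
  -- Mixed signs would make `A` or `A + C` a multiple of `π`.
  · obtain ⟨j, hj | hj⟩ := cos_eq_cos_iff.1 hxy.symm
    · exact absurd (by push_cast; linarith) (not_int_mul_pi (by linarith) hAC (m - k - j))
    · exact absurd (by push_cast; linarith) (not_int_mul_pi hA (by linarith) (m - k - j))
  · obtain ⟨j, hj | hj⟩ := cos_eq_cos_iff.1 hxy.symm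
    · exact absurd (by push_cast; linarith) (not_int_mul_pi hA (by linarith) (j - m + k))
    · exact absurd (by push_cast; linarith) (not_int_mul_pi (by linarith) hAC (j - m + k))
  · exact ⟨-1, .inr rfl, ⟨k, by linarith⟩, m, by linarith⟩

theorem lineAngle_sub_eq {ε a x : ℝ} (hε : ε = 1 ∨ ε = -1) {k : ℤ} (h : x = ε * a + 2 * k * π)
    (s : ℝ) : lineAngle (s - x) = lineAngle (ε * s - a) := by
  have hεε : ε * ε = 1 := by rcases hε with rfl | rfl <;> norm_num
  calc lineAngle (s - x) = lineAngle (ε * (ε * s - a) + ((-(2 * k) : ℤ) : ℝ) * π) := by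
        congr 1; push_cast; linear_combination (-1) * h - s * hεε
    _ = lineAngle (ε * s - a) := by rw [lineAngle_add_int_mul_pi, lineAngle_sign_mul hε]

noncomputable def unitVec (θ : ℝ) : EuclideanSpace ℝ (Fin 2) := !₂[cos θ, sin θ]

theorem inner_unitVec (φ θ : ℝ) : ⟪unitVec φ, unitVec θ⟫ = cos (φ - θ) := by
  simp only [unitVec, PiLp.inner_apply, RCLike.inner_apply, conj_trivial, Fin.sum_univ_two,
    Fin.isValue, Matrix.cons_val_zero, Matrix.cons_val_one, Matrix.cons_val_fin_one, cos_sub]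
  ring

theorem norm_unitVec (θ : ℝ) : ‖unitVec θ‖ = 1 := by
  rw [norm_eq_sqrt_real_inner, inner_unitVec, sub_self, cos_zero, sqrt_one]

theorem exists_eq_norm_smul_unitVec (x : EuclideanSpace ℝ (Fin 2)) :
    ∃ θ, x = ‖x‖ • unitVec θ := by
  set z : ℂ := ⟨x 0, x 1⟩
  have hz : ‖z‖ = ‖x‖ := by
    rw [Complex.norm_def, Complex.normSq_mk, EuclideanSpace.norm_eq, Fin.sum_univ_two]
    simp [sq]
  refine ⟨z.arg, ?_⟩
  ext i
  fin_cases i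
  · simp [unitVec, ← hz, Complex.norm_mul_cos_arg, z]
  · simp [unitVec, ← hz, Complex.norm_mul_sin_arg, z]

theorem cos_angle_eq_cos_sub {x y : EuclideanSpace ℝ (Fin 2)} {θ φ : ℝ} (hx : x ≠ 0)
    (hy : y ≠ 0) (hθ : x = ‖x‖ • unitVec θ) (hφ : y = ‖y‖ • unitVec φ) :
    cos (InnerProductGeometry.angle x y) = cos (φ - θ) := by
  rw [hθ, hφ, InnerProductGeometry.angle_smul_left_of_pos _ _ (norm_pos_iff.2 hx),
    InnerProductGeometry.angle_smul_right_of_pos _ _ (norm_pos_iff.2 hy),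
    InnerProductGeometry.cos_angle, inner_unitVec, norm_unitVec θ, norm_unitVec φ, mul_one,
    div_one, ← cos_neg, neg_sub]

section Edges

variable {ι E : Type*} [NormedAddCommGroup E] [InnerProductSpace ℝ E]

noncomputable def edgeLineAngle (v : ι → E) (ξ : E) (i j : ι) : ℝ :=
  arccos (|⟪ξ, v j - v i⟫| / dist (v i) (v j))

theorem edgeLineAngle_comm (v : ι → E) (ξ : E) (i j : ι) :
    edgeLineAngle v ξ i j = edgeLineAngle v ξ j i := by
  rw [edgeLineAngle, edgeLineAngle, ← neg_sub, inner_neg_right, abs_neg, dist_comm]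

end Edges

theorem edgeLineAngle_unitVec {ι : Type*} {v : ι → EuclideanSpace ℝ (Fin 2)} {i j : ι} {θ : ℝ}
    (hij : v i ≠ v j) (hθ : v j - v i = ‖v j - v i‖ • unitVec θ) (φ : ℝ) :
    edgeLineAngle v (unitVec φ) i j = lineAngle (φ - θ) := by
  have hinner : ⟪unitVec φ, v j - v i⟫ = ‖v j - v i‖ * cos (φ - θ) := by
    nth_rw 1 [hθ]; rw [inner_smul_right, inner_unitVec]
  rw [edgeLineAngle, dist_eq_norm_sub', hinner, abs_mul, abs_norm,
    mul_div_cancel_left₀ _ (norm_ne_zero_iff.2 (sub_ne_zero.2 hij.symm)), lineAngle]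

theorem forall_ne_fin_three_iff {R : Fin 3 → Fin 3 → Prop} (hR : ∀ i j, R i j → R j i) :
    (∀ i j, i ≠ j → R i j) ↔ R 0 1 ∧ R 0 2 ∧ R 1 2 := by
  refine ⟨fun h => ⟨h 0 1 (by decide), h 0 2 (by decide), h 1 2 (by decide)⟩, ?_⟩
  rintro ⟨h01, h02, h12⟩ i j hij
  fin_cases i <;> fin_cases j <;> first | exact absurd rfl hij | assumption | exact hR _ _ ‹_›

section Triangle

open EuclideanGeometry

variable {V P : Type*} [NormedAddCommGroup V] [InnerProductSpace ℝ V] [MetricSpace P]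
  [NormedAddTorsor V P] {v : Fin 3 → P}

theorem angle_pos_of_affineIndependent (hv : AffineIndependent ℝ v) {i j k : Fin 3}
    (hij : i ≠ j) (hik : i ≠ k) (hjk : j ≠ k) : 0 < ∠ (v i) (v j) (v k) :=
  angle_pos_of_not_collinear ((affineIndependent_iff_not_collinear_of_ne hij hik hjk).1 hv)

theorem angle_add_angle_add_angle_eq_pi_fin_three (h : v 0 ≠ v 1) :
    ∠ (v 1) (v 0) (v 2) + ∠ (v 0) (v 1) (v 2) + ∠ (v 0) (v 2) (v 1) = π := by
  rw [← angle_add_angle_add_angle_eq_pi (v 2) h.symm, angle_comm (v 1) (v 2), angle_comm (v 2)]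
  ring

end Triangle

open EuclideanGeometry in
theorem exists_edgeLineAngle_unitVec_eq {v : Fin 3 → EuclideanSpace ℝ (Fin 2)}
    (hv : AffineIndependent ℝ v) :
    ∃ θ ε : ℝ, (ε = 1 ∨ ε = -1) ∧ ∀ φ,
      edgeLineAngle v (unitVec φ) 0 1 = lineAngle (ε * (φ - θ)) ∧
      edgeLineAngle v (unitVec φ) 0 2 = lineAngle (ε * (φ - θ) - ∠ (v 1) (v 0) (v 2)) ∧
      edgeLineAngle v (unitVec φ) 1 2 =
        lineAngle (ε * (φ - θ) - ∠ (v 1) (v 0) (v 2) - ∠ (v 0) (v 2) (v 1)) := by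
  have hA : 0 < ∠ (v 1) (v 0) (v 2) :=
    angle_pos_of_affineIndependent hv (by decide) (by decide) (by decide)
  have hB : 0 < ∠ (v 0) (v 1) (v 2) :=
    angle_pos_of_affineIndependent hv (by decide) (by decide) (by decide)
  have hC : 0 < ∠ (v 0) (v 2) (v 1) :=
    angle_pos_of_affineIndependent hv (by decide) (by decide) (by decide)
  have h01 : v 0 ≠ v 1 := hv.injective.ne (by decide)
  have h02 : v 0 ≠ v 2 := hv.injective.ne (by decide)
  have h12 : v 1 ≠ v 2 := hv.injective.ne (by decide)
  have hsum := angle_add_angle_add_angle_eq_pi_fin_three h01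
  obtain ⟨θ₁, h₁⟩ := exists_eq_norm_smul_unitVec (v 1 - v 0)
  obtain ⟨θ₂, h₂⟩ := exists_eq_norm_smul_unitVec (v 2 - v 0)
  obtain ⟨θ₃, h₃⟩ := exists_eq_norm_smul_unitVec (v 2 - v 1)
  have hx : cos (θ₂ - θ₁) = cos (∠ (v 1) (v 0) (v 2)) :=
    (cos_angle_eq_cos_sub (sub_ne_zero.2 h01.symm) (sub_ne_zero.2 h02.symm) h₁ h₂).symm
  have hy : cos (θ₃ - θ₁) = cos (∠ (v 1) (v 0) (v 2) + ∠ (v 0) (v 2) (v 1)) := by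
    have hB' : ∠ (v 0) (v 1) (v 2) = π - InnerProductGeometry.angle (v 1 - v 0) (v 2 - v 1) := by
      rw [angle, vsub_eq_sub, vsub_eq_sub, ← neg_sub (v 1) (v 0),
        InnerProductGeometry.angle_neg_left]
    rw [← cos_angle_eq_cos_sub (sub_ne_zero.2 h01.symm) (sub_ne_zero.2 h12.symm) h₁ h₃]
    congr 1
    linarith
  have hxy : cos ((θ₃ - θ₁) - (θ₂ - θ₁)) = cos (∠ (v 0) (v 2) (v 1)) := by
    rw [sub_sub_sub_cancel_right, angle, vsub_eq_sub, vsub_eq_sub, ← neg_sub (v 2) (v 0),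
      ← neg_sub (v 2) (v 1), InnerProductGeometry.angle_neg_neg,
      cos_angle_eq_cos_sub (sub_ne_zero.2 h02.symm) (sub_ne_zero.2 h12.symm) h₂ h₃]
  obtain ⟨ε, hε, ⟨k, hk⟩, m, hm⟩ := exists_sign_of_cos_eq hA hC (by linarith) hx hy hxy
  refine ⟨θ₁, ε, hε, fun φ => ⟨?_, ?_, ?_⟩⟩
  · rw [edgeLineAngle_unitVec h01 h₁, lineAngle_sign_mul hε]
  · rw [edgeLineAngle_unitVec h02 h₂, ← lineAngle_sub_eq hε hk, sub_sub_sub_cancel_right]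
  · rw [edgeLineAngle_unitVec h12 h₃, sub_sub, ← lineAngle_sub_eq hε hm,
      sub_sub_sub_cancel_right]

/-- For a nondegenerate triangle `K` in `ℝ²` with vertices `v 0, v 1, v 2`,
the coplanarity `θ_K = max_{|ξ|=1} min_i arccos(|ξ · u_i|)` (the `u_i` being unit vectors
parallel to the edges) equals half of the largest angle of the triangle. -/
theorem stmt9 (v : Fin 3 → EuclideanSpace ℝ (Fin 2)) (hv : AffineIndependent ℝ v) :
    sSup {t : ℝ | ∃ ξ : EuclideanSpace ℝ (Fin 2), ‖ξ‖ = 1 ∧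
        ∀ i j, i ≠ j → t ≤ Real.arccos (abs ⟪ξ, v j - v i⟫ / dist (v i) (v j))} =
      (max (EuclideanGeometry.angle (v 1) (v 0) (v 2))
        (max (EuclideanGeometry.angle (v 0) (v 1) (v 2))
          (EuclideanGeometry.angle (v 0) (v 2) (v 1)))) / 2 := by
  have hsum := angle_add_angle_add_angle_eq_pi_fin_three (hv.injective.ne zero_ne_one)
  obtain ⟨θ, ε, hε, hedge⟩ := exists_edgeLineAngle_unitVec_eq hv
  have hεε : ε * ε = 1 := by rcases hε with rfl | rfl <;> norm_num
  have hpairs (t : ℝ) (ξ : EuclideanSpace ℝ (Fin 2)) :=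
    forall_ne_fin_three_iff (R := fun i j => t ≤ edgeLineAngle v ξ i j)
      fun i j h => (edgeLineAngle_comm v ξ i j).symm ▸ h
  refine IsGreatest.csSup_eq ⟨?_, ?_⟩
  · obtain ⟨s, hs⟩ := exists_le_min_lineAngle (EuclideanGeometry.angle_nonneg _ _ _)
      (EuclideanGeometry.angle_nonneg _ _ _) (EuclideanGeometry.angle_nonneg _ _ _) hsum
    obtain ⟨e01, e02, e12⟩ := hedge (θ + ε * s)
    rw [add_sub_cancel_left, ← mul_assoc, hεε, one_mul] at e01 e02 e12
    rw [le_min_iff, le_min_iff, ← e01, ← e02, ← e12] at hs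
    exact ⟨unitVec (θ + ε * s), norm_unitVec _, (hpairs _ _).2 hs⟩
  · rintro t ⟨ξ, hξ, ht⟩
    obtain ⟨φ, rfl⟩ : ∃ φ, ξ = unitVec φ := by simpa [hξ] using exists_eq_norm_smul_unitVec ξ
    obtain ⟨e01, e02, e12⟩ := hedge φ
    have hmin := min_lineAngle_le hsum (ε * (φ - θ))
    rw [← e01, ← e02, ← e12] at hmin
    obtain ⟨t01, t02, t12⟩ := (hpairs t _).1 ht
    exact (le_min t01 (le_min t02 t12)).trans hmin
end

section
/- Let K be a tetrahedron in ℝ^3 with maximum face/dihedral angle ψ realized by a dihedral angle. Then the coplanarity θ_K = max_{|ξ|=1} min_i arccos|ξ · u_i| satisfies θ_K ≥ ψ/2, where u_i are unit vectors along the edges of K. -/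
open Real
open scoped RealInnerProductSpace

/-!
Every vertex lies in the union of the half-planes `{α w + β a | β ≥ 0}` and `{α w + β b | β ≥ 0}`,
so every edge vector has the form `v = x w + y a + z b` with `y z ≤ 0`. For such `v`,
`⟪a + b, v⟫ = (y + z) (1 + ⟪a, b⟫)` and `‖v‖² ≥ (y + z)²`, so the unit bisector `ξ` of `a` and `b`
satisfies `|⟪ξ, v⟫| ≤ ‖a + b‖ / 2 * ‖v‖ = cos (ψ / 2) * ‖v‖`: every edge makes an angle at least
`ψ / 2` with the line `ℝ ξ`. When `a + b = 0` the tetrahedron is flat and a unit normal works.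
-/

section

variable {E : Type*} [NormedAddCommGroup E] [InnerProductSpace ℝ E]

def halfPlane (w a : E) : Set E := {v | ∃ α β : ℝ, 0 ≤ β ∧ v = α • w + β • a}

theorem exists_sub_eq_of_mem_halfPlane {w a b u v : E}
    (hu : u ∈ halfPlane w a ∪ halfPlane w b) (hv : v ∈ halfPlane w a ∪ halfPlane w b) :
    ∃ x y z : ℝ, y * z ≤ 0 ∧ u - v = x • w + y • a + z • b := by
  rcases hu with ⟨α, β, hβ, rfl⟩ | ⟨α, β, hβ, rfl⟩ <;>
    rcases hv with ⟨α', β', hβ', rfl⟩ | ⟨α', β', hβ', rfl⟩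
  · exact ⟨α - α', β - β', 0, by simp, by module⟩
  · exact ⟨α - α', β, -β', by nlinarith, by module⟩
  · exact ⟨α - α', -β', β, by nlinarith, by module⟩
  · exact ⟨α - α', 0, β - β', by simp, by module⟩

theorem abs_inner_add_le {w a b : E} (ha : ‖a‖ = 1) (hb : ‖b‖ = 1)
    (haw : ⟪a, w⟫ = 0) (hbw : ⟪b, w⟫ = 0) {x y z : ℝ} (hyz : y * z ≤ 0) :
    |⟪a + b, x • w + y • a + z • b⟫| ≤ (1 + ⟪a, b⟫) * ‖x • w + y • a + z • b‖ := by
  set v := x • w + y • a + z • b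
  have haa : ⟪a, a⟫ = 1 := by simp [ha]
  have hbb : ⟪b, b⟫ = 1 := by simp [hb]
  have hab_le : ⟪a, b⟫ ≤ 1 := by simpa [ha, hb] using real_inner_le_norm a b
  have hinner : ⟪a + b, v⟫ = (y + z) * (1 + ⟪a, b⟫) := by
    simp only [v, inner_add_left, inner_add_right, real_inner_smul_right, haa, hbb, haw, hbw,
      real_inner_comm a b]
    ring
  have hnorm : ‖v‖ ^ 2 = x ^ 2 * ‖w‖ ^ 2 + y ^ 2 + z ^ 2 + 2 * y * z * ⟪a, b⟫ := by
    rw [← real_inner_self_eq_norm_sq, ← real_inner_self_eq_norm_sq]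
    simp only [v, inner_add_left, inner_add_right, real_inner_smul_left, real_inner_smul_right,
      haa, hbb, haw, hbw, real_inner_comm a b, real_inner_comm a w, real_inner_comm b w]
    ring
  have hyz_le : |y + z| ≤ ‖v‖ :=
    abs_le_of_sq_le_sq (by nlinarith [sq_nonneg x, sq_nonneg ‖w‖]) (norm_nonneg v)
  have hab_ge : -1 ≤ ⟪a, b⟫ := by
    simpa [ha, hb] using neg_le_of_abs_le (abs_real_inner_le_norm a b)
  rw [hinner, abs_mul, abs_of_nonneg (by linarith : 0 ≤ 1 + ⟪a, b⟫), mul_comm]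
  exact mul_le_mul_of_nonneg_left hyz_le (by linarith)

theorem exists_norm_eq_one_inner_eq_zero [FiniteDimensional ℝ E] (hE : 2 < Module.finrank ℝ E)
    (u v : E) : ∃ ξ : E, ‖ξ‖ = 1 ∧ ⟪ξ, u⟫ = 0 ∧ ⟪ξ, v⟫ = 0 := by
  set K := Submodule.span ℝ (Set.range ![u, v])
  have hK : K ≠ ⊤ := (Submodule.lt_top_of_finrank_lt_finrank
    ((finrank_range_le_card _).trans_lt (by simpa using hE))).ne
  obtain ⟨ζ, hζK, hζ⟩ := Submodule.exists_mem_ne_zero_of_ne_bot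
    (mt Submodule.orthogonal_eq_bot_iff.mp hK)
  have hperp {x : E} (hx : x ∈ K) : ⟪‖ζ‖⁻¹ • ζ, x⟫ = 0 := by
    rw [real_inner_smul_left, Submodule.inner_left_of_mem_orthogonal hx hζK, mul_zero]
  exact ⟨‖ζ‖⁻¹ • ζ, norm_smul_inv_norm hζ, hperp (Submodule.subset_span ⟨0, rfl⟩),
    hperp (Submodule.subset_span ⟨1, rfl⟩)⟩

theorem exists_norm_eq_one_abs_inner_le [FiniteDimensional ℝ E] (hE : 2 < Module.finrank ℝ E)
    {w a b : E} (ha : ‖a‖ = 1) (hb : ‖b‖ = 1) (haw : ⟪a, w⟫ = 0) (hbw : ⟪b, w⟫ = 0) :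
    ∃ ξ : E, ‖ξ‖ = 1 ∧ ∀ x y z : ℝ, y * z ≤ 0 →
      |⟪ξ, x • w + y • a + z • b⟫| ≤ ‖a + b‖ / 2 * ‖x • w + y • a + z • b‖ := by
  by_cases hab : a + b = 0
  · obtain ⟨ξ, hξ, hξw, hξa⟩ := exists_norm_eq_one_inner_eq_zero hE w a
    refine ⟨ξ, hξ, fun x y z _ => ?_⟩
    simp [eq_neg_of_add_eq_zero_right hab, inner_add_right, real_inner_smul_right, hξw, hξa]
  · refine ⟨‖a + b‖⁻¹ • (a + b), norm_smul_inv_norm hab, fun x y z hyz => ?_⟩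
    have hsq : ‖a + b‖ ^ 2 = 2 * (1 + ⟪a, b⟫) := by rw [norm_add_sq_real, ha, hb]; ring
    rw [real_inner_smul_left, abs_mul, abs_inv, abs_norm]
    calc ‖a + b‖⁻¹ * |⟪a + b, x • w + y • a + z • b⟫|
        ≤ ‖a + b‖⁻¹ * ((1 + ⟪a, b⟫) * ‖x • w + y • a + z • b‖) := by
          gcongr; exact abs_inner_add_le ha hb haw hbw hyz
      _ = ‖a + b‖ / 2 * ‖x • w + y • a + z • b‖ := by
          have : ‖a + b‖ ≠ 0 := norm_ne_zero_iff.mpr hab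
          rw [show 1 + ⟪a, b⟫ = ‖a + b‖ ^ 2 / 2 by rw [hsq]; ring]
          field_simp

theorem norm_add_eq_two_mul_cos_half {a b : E} (ha : ‖a‖ = 1) (hb : ‖b‖ = 1) {ψ : ℝ}
    (hab : ⟪a, b⟫ = cos ψ) (hψ0 : -π ≤ ψ) (hψπ : ψ ≤ π) : ‖a + b‖ = 2 * cos (ψ / 2) := by
  have hcos : 0 ≤ cos (ψ / 2) := cos_nonneg_of_mem_Icc ⟨by linarith, by linarith⟩
  refine (sq_eq_sq₀ (norm_nonneg _) (by positivity)).mp ?_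
  rw [norm_add_sq_real, ha, hb, hab, mul_pow, cos_sq (ψ / 2), mul_div_cancel₀ ψ two_ne_zero]
  ring

end

theorem le_arccos_div_of_le_cos_mul {q r θ : ℝ} (hθ0 : 0 ≤ θ) (hθ : θ ≤ π / 2) (hr : 0 ≤ r)
    (h : q ≤ cos θ * r) : θ ≤ arccos (q / r) := by
  have hq : q / r ≤ cos θ := by
    -- `r = 0` is the junk case `q / 0 = 0`
    rcases hr.eq_or_lt with rfl | hr
    · simpa using cos_nonneg_of_mem_Icc ⟨by linarith, hθ⟩
    · exact (div_le_iff₀ hr).mpr h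
  calc θ = arccos (cos θ) := (arccos_cos hθ0 (by linarith [pi_pos])).symm
    _ ≤ arccos (q / r) := arccos_le_arccos hq

theorem stmt10_general (p : Fin 4 → EuclideanSpace ℝ (Fin 3))
    (ψ : ℝ) (hψ0 : 0 ≤ ψ) (hψπ : ψ ≤ π)
    (w a b : EuclideanSpace ℝ (Fin 3))
    (ha : ‖a‖ = 1) (hb : ‖b‖ = 1)
    (haw : ⟪a, w⟫ = 0) (hbw : ⟪b, w⟫ = 0)
    (hab : ⟪a, b⟫ = Real.cos ψ)
    (hedge : ∃ c : ℝ, p 1 - p 0 = c • w)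
    (hv3 : ∃ α β : ℝ, 0 ≤ β ∧ p 2 - p 0 = α • w + β • a)
    (hv4 : ∃ α β : ℝ, 0 ≤ β ∧ p 3 - p 0 = α • w + β • b) :
    ψ / 2 ≤ sSup {t : ℝ | ∃ ξ : EuclideanSpace ℝ (Fin 3), ‖ξ‖ = 1 ∧
      ∀ i j, i ≠ j → t ≤ Real.arccos (abs ⟪ξ, p j - p i⟫ / dist (p i) (p j))} := by
  obtain ⟨ξ, hξ, hbound⟩ := exists_norm_eq_one_abs_inner_le (by simp) ha hb haw hbw
  rw [norm_add_eq_two_mul_cos_half ha hb hab (by linarith [pi_pos]) hψπ,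
    mul_div_cancel_left₀ _ two_ne_zero] at hbound
  have hvertex : ∀ k, p k - p 0 ∈ halfPlane w a ∪ halfPlane w b := by
    obtain ⟨c, hc⟩ := hedge
    intro k
    fin_cases k
    · exact .inl ⟨0, 0, le_rfl, by simp⟩
    · exact .inl ⟨c, 0, le_rfl, by simp [hc]⟩
    · exact .inl hv3
    · exact .inr hv4
  refine le_csSup ⟨π, ?_⟩ ⟨ξ, hξ, fun i j _ => ?_⟩
  · rintro t ⟨_, -, ht⟩
    exact (ht 0 1 (by decide)).trans (arccos_le_pi _)
  · obtain ⟨x, y, z, hyz, hij⟩ := exists_sub_eq_of_mem_halfPlane (hvertex j) (hvertex i)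
    rw [sub_sub_sub_cancel_right] at hij
    rw [dist_comm, dist_eq_norm, hij]
    exact le_arccos_div_of_le_cos_mul (by linarith) (by linarith) (norm_nonneg _)
      (hbound x y z hyz)

/-- Let `K` be a tetrahedron in `ℝ³` whose maximum face/dihedral angle `ψ` is
realized by a dihedral angle: all vertices lie in two planes meeting along an edge at angle
`ψ`.  Concretely the edge direction is a unit vector `w`, and unit vectors `a ⊥ w`, `b ⊥ w`
with `⟪a, b⟫ = cos ψ` span the two half-planes containing the other two vertices.  Then the
coplanarity `θ_K = max_{|ξ|=1} min_i arccos |ξ · u_i|` satisfies `θ_K ≥ ψ/2`. -/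
theorem stmt10 (p : Fin 4 → EuclideanSpace ℝ (Fin 3)) (hp : AffineIndependent ℝ p)
    (ψ : ℝ) (hψ0 : 0 ≤ ψ) (hψπ : ψ ≤ π)
    (w a b : EuclideanSpace ℝ (Fin 3))
    (hw : ‖w‖ = 1) (ha : ‖a‖ = 1) (hb : ‖b‖ = 1)
    (haw : ⟪a, w⟫ = 0) (hbw : ⟪b, w⟫ = 0)
    (hab : ⟪a, b⟫ = Real.cos ψ)
    (hedge : ∃ c : ℝ, p 1 - p 0 = c • w)
    (hv3 : ∃ α β : ℝ, 0 ≤ β ∧ p 2 - p 0 = α • w + β • a)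
    (hv4 : ∃ α β : ℝ, 0 ≤ β ∧ p 3 - p 0 = α • w + β • b) :
    ψ / 2 ≤ sSup {t : ℝ | ∃ ξ : EuclideanSpace ℝ (Fin 3), ‖ξ‖ = 1 ∧
      ∀ i j, i ≠ j → t ≤ Real.arccos (abs ⟪ξ, p j - p i⟫ / dist (p i) (p j))} :=
  stmt10_general p ψ hψ0 hψπ w a b ha hb haw hbw hab hedge hv3 hv4
end

section
/- Let K be a tetrahedron whose largest face/dihedral angle ψ is realized by the face angle at vertex v_1 in the triangle (v_1, v_2, v_3), with v_4 the remaining vertex and |v_2 - v_4| ≤ |v_3 - v_4|. Let ξ̂ be the unit normal to the plane through v_1, v_2, v_4. Then |ξ̂ · (v_3 - v_4)| / |v_3 - v_4| ≤ 2 cos(ψ - π/2), and consequently θ_K ≥ arccos(2 cos(ψ - π/2)) whenever 2cos(ψ - π/2) ≤ 1. -/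
/-!
The normal `ξ` is orthogonal to `v 1 - v 0` and `v 3 - v 0`, so the only edges with a nonzero
component along `ξ` are those ending at `v 2`, and all these components equal
`⟪ξ, v 2 - v 0⟫ = ⟪ξ, v 2 - v 1⟫ = ⟪ξ, v 2 - v 3⟫`. Since `ξ ⟂ v 1 - v 0`, this component is at
most the distance from `v 2` to the line `v 0 v 1`, i.e. `|v 2 - v 0| sin ψ`, and also
`|v 2 - v 1| sin ∠ v 0 v 1 v 2 ≤ |v 2 - v 1| sin ψ` because `∠ v 0 v 1 v 2 ≤ ψ` and the two
angles sum to at most `π`. Finally `|v 2 - v 1| ≤ 2 |v 2 - v 3|`, so every edge ratio is at most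
`2 sin ψ = 2 cos (ψ - π / 2)` and `ξ` witnesses the bound on the coplanarity.
-/

open Real
open scoped RealInnerProductSpace

namespace InnerProductGeometry
variable {E : Type*} [NormedAddCommGroup E] [InnerProductSpace ℝ E]

theorem abs_inner_le_norm_mul_norm_mul_sin_angle_of_inner_eq_zero {ξ a : E} (b : E)
    (h : ⟪ξ, a⟫ = 0) : |⟪ξ, b⟫| ≤ ‖ξ‖ * ‖b‖ * sin (angle a b) := by
  rcases eq_or_ne a 0 with rfl | ha
  · simpa [angle_zero_left] using abs_real_inner_le_norm ξ b
  have hna : 0 < ‖a‖ := norm_pos_iff.2 ha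
  -- Cauchy–Schwarz for `ξ` and the vector `‖a‖² b - ⟪a, b⟫ a`, which is orthogonal to `a`
  set w : E := ‖a‖ ^ 2 • b - ⟪a, b⟫ • a
  have hξw : ⟪ξ, w⟫ = ‖a‖ ^ 2 * ⟪ξ, b⟫ := by
    simp [w, inner_sub_right, inner_smul_right, h]
  have hww : ⟪w, w⟫ = ‖a‖ ^ 2 * (‖a‖ ^ 2 * ‖b‖ ^ 2 - ⟪a, b⟫ ^ 2) := by
    simp only [w, inner_sub_left, inner_sub_right, inner_smul_left, inner_smul_right,
      real_inner_self_eq_norm_sq, real_inner_comm a b, RCLike.conj_to_real]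
    ring
  have hcs : (‖a‖ ^ 2 * ⟪ξ, b⟫) ^ 2 ≤
      ‖ξ‖ ^ 2 * (‖a‖ ^ 2 * (‖a‖ ^ 2 * ‖b‖ ^ 2 - ⟪a, b⟫ ^ 2)) := by
    rw [← hξw, ← hww, ← real_inner_self_eq_norm_sq, sq]
    exact real_inner_mul_inner_self_le ξ w
  have hsq : (‖a‖ * |⟪ξ, b⟫|) ^ 2 ≤ (‖ξ‖ * (sin (angle a b) * (‖a‖ * ‖b‖))) ^ 2 := by
    rw [sin_angle_mul_norm_mul_norm, mul_pow, mul_pow, sq_abs,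
      sq_sqrt (sub_nonneg.2 (real_inner_mul_inner_self_le a b)), real_inner_self_eq_norm_sq,
      real_inner_self_eq_norm_sq, ← sq]
    refine le_of_mul_le_mul_left ?_ (by positivity : 0 < ‖a‖ ^ 2)
    linarith
  have hsin : 0 ≤ sin (angle a b) :=
    sin_nonneg_of_nonneg_of_le_pi (angle_nonneg a b) (angle_le_pi a b)
  refine le_of_mul_le_mul_left ?_ hna
  calc ‖a‖ * |⟪ξ, b⟫| ≤ ‖ξ‖ * (sin (angle a b) * (‖a‖ * ‖b‖)) :=
        (pow_le_pow_iff_left₀ (by positivity) (by positivity) two_ne_zero).1 hsq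
    _ = ‖a‖ * (‖ξ‖ * ‖b‖ * sin (angle a b)) := by ring

end InnerProductGeometry

theorem Real.sin_le_sin_of_le_of_add_le_pi {x y : ℝ} (hx : -(π / 2) ≤ x) (hxy : x ≤ y)
    (hxy' : x + y ≤ π) : sin x ≤ sin y := by
  rcases le_total y (π / 2) with hy | hy
  · exact sin_le_sin_of_le_of_le_pi_div_two hx hy hxy
  · rw [← sin_pi_sub y]
    exact sin_le_sin_of_le_of_le_pi_div_two hx (by linarith) (by linarith)

namespace EuclideanGeometry
open InnerProductGeometry
variable {V P : Type*} [NormedAddCommGroup V] [InnerProductSpace ℝ V] [MetricSpace P]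
  [NormedAddTorsor V P]

theorem sin_angle_le_sin_angle_of_angle_le {p₀ p₁ p₂ : P} (h : ∠ p₀ p₁ p₂ ≤ ∠ p₁ p₀ p₂) :
    sin (∠ p₀ p₁ p₂) ≤ sin (∠ p₁ p₀ p₂) := by
  rcases eq_or_ne p₁ p₀ with rfl | hne
  · rfl
  have hsum := angle_add_angle_add_angle_eq_pi p₂ hne
  rw [angle_comm p₂ p₀ p₁] at hsum
  exact sin_le_sin_of_le_of_add_le_pi (by linarith [angle_nonneg p₀ p₁ p₂, pi_pos]) h
    (by linarith [angle_nonneg p₁ p₂ p₀])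

theorem abs_inner_vsub_le_of_inner_vsub_eq_zero {ξ : V} {p₀ p₁ : P} (p₂ : P)
    (hξ : ⟪ξ, p₁ -ᵥ p₀⟫ = 0) : |⟪ξ, p₂ -ᵥ p₀⟫| ≤ ‖ξ‖ * dist p₀ p₂ * sin (∠ p₁ p₀ p₂) := by
  rw [dist_eq_norm_vsub' V]
  exact abs_inner_le_norm_mul_norm_mul_sin_angle_of_inner_eq_zero _ hξ

theorem abs_inner_vsub_le_of_inner_vsub_eq_zero_of_angle_le {ξ : V} {p₀ p₁ p₂ : P}
    (hξ : ⟪ξ, p₁ -ᵥ p₀⟫ = 0) (h : ∠ p₀ p₁ p₂ ≤ ∠ p₁ p₀ p₂) :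
    |⟪ξ, p₂ -ᵥ p₁⟫| ≤ ‖ξ‖ * dist p₁ p₂ * sin (∠ p₁ p₀ p₂) := by
  have hξ' : ⟪ξ, p₀ -ᵥ p₁⟫ = 0 := by rw [← neg_vsub_eq_vsub_rev, inner_neg_right, hξ, neg_zero]
  refine (abs_inner_vsub_le_of_inner_vsub_eq_zero p₂ hξ').trans ?_
  gcongr
  exact sin_angle_le_sin_angle_of_angle_le h

end EuclideanGeometry

section Coplanarity
variable {ι E : Type*} [NormedAddCommGroup E] [InnerProductSpace ℝ E]

/-- The coplanarity `θ_K` of the configuration `v`. -/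
noncomputable def coplanarity (v : ι → E) : ℝ :=
  sSup {t : ℝ | ∃ ζ : E, ‖ζ‖ = 1 ∧
    ∀ i j, i ≠ j → t ≤ arccos (|⟪ζ, v j - v i⟫| / dist (v i) (v j))}

theorem arccos_le_coplanarity [Nontrivial ι] (v : ι → E) {ζ : E} (hζ : ‖ζ‖ = 1) {c : ℝ}
    (h : ∀ i j, i ≠ j → |⟪ζ, v j - v i⟫| / dist (v i) (v j) ≤ c) :
    arccos c ≤ coplanarity v := by
  obtain ⟨i, j, hij⟩ := exists_pair_ne ι
  refine le_csSup ⟨π, ?_⟩ ⟨ζ, hζ, fun i j hij => arccos_le_arccos (h i j hij)⟩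
  rintro t ⟨ζ', -, hζ'⟩
  exact (hζ' i j hij).trans (arccos_le_pi _)

theorem abs_inner_sub_div_dist_le_of_apex (v : ι → E) {ξ : E} (k : ι) {c : ℝ} (hc : 0 ≤ c)
    (hplane : ∀ i j, i ≠ k → j ≠ k → ⟪ξ, v j - v i⟫ = 0)
    (hapex : ∀ i, i ≠ k → |⟪ξ, v k - v i⟫| ≤ c * dist (v i) (v k)) (i j : ι) :
    |⟪ξ, v j - v i⟫| / dist (v i) (v j) ≤ c := by
  refine div_le_of_le_mul₀ dist_nonneg hc ?_
  by_cases hi : i = k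
  · by_cases hj : j = k
    · simp [hi, hj]
    · subst hi
      rw [← neg_sub, inner_neg_right, abs_neg, dist_comm]
      exact hapex j hj
  · by_cases hj : j = k
    · exact hj ▸ hapex i hi
    · rw [hplane i j hi hj, abs_zero]
      positivity

end Coplanarity

theorem stmt11_general (v : Fin 4 → EuclideanSpace ℝ (Fin 3))
    (ψ : ℝ)
    (hψdef : ψ = EuclideanGeometry.angle (v 1) (v 0) (v 2))
    (hψmax1 : EuclideanGeometry.angle (v 0) (v 1) (v 2) ≤ ψ)
    (hdist : dist (v 1) (v 3) ≤ dist (v 2) (v 3))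
    (ξ : EuclideanSpace ℝ (Fin 3)) (hξ : ‖ξ‖ = 1)
    (hξ1 : ⟪ξ, v 1 - v 0⟫ = 0) (hξ2 : ⟪ξ, v 3 - v 0⟫ = 0) :
    abs ⟪ξ, v 2 - v 3⟫ / dist (v 3) (v 2) ≤ 2 * Real.cos (ψ - π / 2) ∧
      (2 * Real.cos (ψ - π / 2) ≤ 1 →
        Real.arccos (2 * Real.cos (ψ - π / 2)) ≤
          sSup {t : ℝ | ∃ ζ : EuclideanSpace ℝ (Fin 3), ‖ζ‖ = 1 ∧
            ∀ i j, i ≠ j → t ≤ Real.arccos (abs ⟪ζ, v j - v i⟫ / dist (v i) (v j))}) := by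
  have hsin : 0 ≤ sin ψ := hψdef ▸ sin_nonneg_of_nonneg_of_le_pi
    (EuclideanGeometry.angle_nonneg _ _ _) (EuclideanGeometry.angle_le_pi _ _ _)
  have hplane : ∀ i j : Fin 4, i ≠ 2 → j ≠ 2 → ⟪ξ, v j - v i⟫ = 0 := by
    have hbase : ∀ i : Fin 4, i ≠ 2 → ⟪ξ, v i - v 0⟫ = 0 := by
      intro i hi
      obtain rfl | rfl | rfl : i = 0 ∨ i = 1 ∨ i = 3 := by omega
      exacts [by simp, hξ1, hξ2]
    intro i j hi hj
    rw [← sub_sub_sub_cancel_right (v j) (v i) (v 0), inner_sub_right, hbase j hj, hbase i hi,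
      sub_zero]
  have h02 := EuclideanGeometry.abs_inner_vsub_le_of_inner_vsub_eq_zero (v 2) hξ1
  have h12 := EuclideanGeometry.abs_inner_vsub_le_of_inner_vsub_eq_zero_of_angle_le hξ1
    (hψdef ▸ hψmax1)
  simp only [vsub_eq_sub, hξ, one_mul, ← hψdef] at h02 h12
  have hapex : ∀ i : Fin 4, i ≠ 2 → |⟪ξ, v 2 - v i⟫| ≤ 2 * sin ψ * dist (v i) (v 2) := by
    intro i hi
    obtain rfl | rfl | rfl : i = 0 ∨ i = 1 ∨ i = 3 := by omega
    · exact h02.trans (by nlinarith [dist_nonneg (x := v 0) (y := v 2)])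
    · exact h12.trans (by nlinarith [dist_nonneg (x := v 1) (y := v 2)])
    · have hshift : ⟪ξ, v 2 - v 3⟫ = ⟪ξ, v 2 - v 1⟫ := by
        rw [← sub_add_sub_cancel (v 2) (v 1) (v 3), inner_add_right,
          hplane 3 1 (by decide) (by decide), add_zero]
      have htri := dist_triangle (v 1) (v 3) (v 2)
      rw [dist_comm (v 2) (v 3)] at hdist
      rw [hshift]
      exact h12.trans (by nlinarith)
  have hbound := abs_inner_sub_div_dist_le_of_apex v 2 (by positivity) hplane hapex
  rw [cos_sub_pi_div_two]
  exact ⟨hbound 3 2, fun _ => arccos_le_coplanarity v hξ fun i j _ => hbound i j⟩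

/-- Let `K = conv{v₁, v₂, v₃, v₄}` (here `v 0, v 1, v 2, v 3`) be a
nondegenerate tetrahedron whose largest face/dihedral angle `ψ` is realized by the face angle
at `v₁` in the triangle `(v₁, v₂, v₃)` (in particular `ψ` dominates the other angles of this
triangle), with `|v₂ - v₄| ≤ |v₃ - v₄|`.  Let `ξ` be the unit normal to the plane through
`v₁, v₂, v₄`.  Then `|ξ · (v₃ - v₄)| / |v₃ - v₄| ≤ 2 cos(ψ - π/2)` and, whenever
`2 cos(ψ - π/2) ≤ 1`, the coplanarity satisfies `θ_K ≥ arccos(2 cos(ψ - π/2))`. -/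
theorem stmt11 (v : Fin 4 → EuclideanSpace ℝ (Fin 3)) (hv : AffineIndependent ℝ v)
    (ψ : ℝ)
    (hψdef : ψ = EuclideanGeometry.angle (v 1) (v 0) (v 2))
    (hψmax1 : EuclideanGeometry.angle (v 0) (v 1) (v 2) ≤ ψ)
    (hψmax2 : EuclideanGeometry.angle (v 0) (v 2) (v 1) ≤ ψ)
    (hdist : dist (v 1) (v 3) ≤ dist (v 2) (v 3))
    (ξ : EuclideanSpace ℝ (Fin 3)) (hξ : ‖ξ‖ = 1)
    (hξ1 : ⟪ξ, v 1 - v 0⟫ = 0) (hξ2 : ⟪ξ, v 3 - v 0⟫ = 0) :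
    abs ⟪ξ, v 2 - v 3⟫ / dist (v 3) (v 2) ≤ 2 * Real.cos (ψ - π / 2) ∧
      (2 * Real.cos (ψ - π / 2) ≤ 1 →
        Real.arccos (2 * Real.cos (ψ - π / 2)) ≤
          sSup {t : ℝ | ∃ ζ : EuclideanSpace ℝ (Fin 3), ‖ζ‖ = 1 ∧
            ∀ i j, i ≠ j → t ≤ Real.arccos (abs ⟪ζ, v j - v i⟫ / dist (v i) (v j))}) :=
  stmt11_general v ψ hψdef hψmax1 hdist ξ hξ hξ1 hξ2
end

section
/- Let u_1, u_2, u_3 be unit vectors in ℝ^3 with |(u_1 × u_2) · u_3| ≥ m^3 for some m ∈ (0,1]. Then for every unit vector ξ ∈ ℝ^3, max_i |ξ · u_i| ≥ min{ m^3/√2, (1/√2) cos((π - arcsin(m^3))/2) }. -/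
/-!
Take an orthonormal basis whose first vector is `ξ`, and let `M` be the matrix of coordinates of
the `u j`: its columns are unit vectors and its rows are `x = (⟪ξ, u j⟫)_j`, `r₁`, `r₂`. From
`det M = x ⬝ (r₁ × r₂)` and `|r₁|² + |r₂|² = 3 - |x|²`, Cauchy–Schwarz and Lagrange's identity give
`det² ≤ |x|² ((3 - |x|²) / 2)²`. When every `|⟪ξ, u j⟫| ≤ c ≤ 1/2` this forces
`m⁶ ≤ 8c²(1 - 2c²)`, that is `1 - 4c² ≤ cos (arcsin m³)`, and with
`cos ((π - θ) / 2) = sin (θ / 2)` this is `sin (arcsin m³ / 2) ≤ √2 c`.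
-/

open Real Matrix
open scoped RealInnerProductSpace

theorem sq_dotProduct_cross_le (x v w : Fin 3 → ℝ) :
    (x ⬝ᵥ v ⨯₃ w) ^ 2 ≤ (x ⬝ᵥ x) * ((v ⬝ᵥ v + w ⬝ᵥ w) / 2) ^ 2 := by
  have cauchy_schwarz (y z : Fin 3 → ℝ) : (y ⬝ᵥ z) ^ 2 ≤ (y ⬝ᵥ y) * (z ⬝ᵥ z) := by
    simpa only [dotProduct, sq] using Finset.sum_mul_sq_le_sq_mul_sq Finset.univ y z
  have hx : 0 ≤ x ⬝ᵥ x := Finset.sum_nonneg fun i _ => mul_self_nonneg (x i)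
  calc (x ⬝ᵥ v ⨯₃ w) ^ 2 ≤ (x ⬝ᵥ x) * (v ⨯₃ w ⬝ᵥ v ⨯₃ w) := cauchy_schwarz _ _
    _ = (x ⬝ᵥ x) * ((v ⬝ᵥ v) * (w ⬝ᵥ w) - (v ⬝ᵥ w) ^ 2) := by
      rw [cross_dot_cross, dotProduct_comm w v, sq]
    _ ≤ (x ⬝ᵥ x) * ((v ⬝ᵥ v + w ⬝ᵥ w) / 2) ^ 2 := by
      gcongr
      nlinarith [sq_nonneg (v ⬝ᵥ v - w ⬝ᵥ w), sq_nonneg (v ⬝ᵥ w)]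

theorem OrthonormalBasis.abs_det_apply_eq {ι E : Type*} [Fintype ι] [DecidableEq ι]
    [NormedAddCommGroup E] [InnerProductSpace ℝ E] (a b : OrthonormalBasis ι ℝ E) (v : ι → E) :
    |a.toBasis.det v| = |b.toBasis.det v| := by
  rw [a.toBasis.det.eq_smul_basis_det b.toBasis, AlternatingMap.smul_apply, smul_eq_mul, abs_mul,
    OrthonormalBasis.coe_toBasis, ← Real.norm_eq_abs (a.toBasis.det b),
    a.det_to_matrix_orthonormalBasis, one_mul]

theorem exists_orthonormalBasis_apply_eq {ι E : Type*} [Fintype ι] [NormedAddCommGroup E]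
    [InnerProductSpace ℝ E] (hE : Module.finrank ℝ E = Fintype.card ι) (i : ι) {ξ : E}
    (hξ : ‖ξ‖ = 1) : ∃ b : OrthonormalBasis ι ℝ E, b i = ξ := by
  have : Nonempty ι := ⟨i⟩
  have : FiniteDimensional ℝ E :=
    Module.finite_of_finrank_pos (by rw [hE]; exact Fintype.card_pos)
  obtain ⟨b, hb⟩ := Orthonormal.exists_orthonormalBasis_extension_of_card_eq (v := fun _ => ξ)
    (s := {i}) hE (orthonormal_subsingleton_iff.mpr fun _ => hξ)
  exact ⟨b, hb i rfl⟩

theorem OrthonormalBasis.sq_det_le {E : Type*} [NormedAddCommGroup E] [InnerProductSpace ℝ E]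
    (hE : Module.finrank ℝ E = 3) (a : OrthonormalBasis (Fin 3) ℝ E) {u : Fin 3 → E}
    (hu : ∀ i, ‖u i‖ = 1) {ξ : E} (hξ : ‖ξ‖ = 1) :
    a.toBasis.det u ^ 2 ≤ (∑ i, ⟪ξ, u i⟫ ^ 2) * ((3 - ∑ i, ⟪ξ, u i⟫ ^ 2) / 2) ^ 2 := by
  obtain ⟨b, rfl⟩ := exists_orthonormalBasis_apply_eq (by simpa using hE) (0 : Fin 3) hξ
  set M := b.toBasis.toMatrix u
  have hM i j : M i j = ⟪b i, u j⟫ := b.repr_apply_apply (u j) i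
  have hcol j : M 0 j ^ 2 + M 1 j ^ 2 + M 2 j ^ 2 = 1 := by
    simpa [hM, hu j, sq, real_inner_comm, Fin.sum_univ_three] using
      b.sum_inner_mul_inner (u j) (u j)
  have hrow₀ : M 0 ⬝ᵥ M 0 = ∑ j, ⟪b 0, u j⟫ ^ 2 := by simp [dotProduct, hM, sq]
  have hrows : M 1 ⬝ᵥ M 1 + M 2 ⬝ᵥ M 2 = 3 - M 0 ⬝ᵥ M 0 := by
    simp only [dotProduct, Fin.sum_univ_three]
    linarith [hcol 0, hcol 1, hcol 2]
  have hdet : b.toBasis.det u = M 0 ⬝ᵥ M 1 ⨯₃ M 2 := by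
    rw [triple_product_eq_det, Module.Basis.det_apply]
    congr 1
    ext i j
    fin_cases i <;> rfl
  rw [← sq_abs, a.abs_det_apply_eq b, sq_abs, hdet, ← hrow₀, ← hrows]
  exact sq_dotProduct_cross_le _ _ _

theorem sq_one_sub_four_mul_sq_le {X c s : ℝ} (hX₀ : 0 ≤ X) (hXc : X ≤ 3 * c ^ 2) (hc₀ : 0 ≤ c)
    (hc : c ≤ 1 / 2) (hs : s ^ 2 ≤ X * ((3 - X) / 2) ^ 2) : (1 - 4 * c ^ 2) ^ 2 ≤ 1 - s ^ 2 := by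
  have hc2 : c ^ 2 ≤ 1 / 4 := by nlinarith
  -- `X ↦ X (3 - X)²` is increasing on `[0, 1]`
  have hmono : X * ((3 - X) / 2) ^ 2 ≤ 3 * c ^ 2 * ((3 - 3 * c ^ 2) / 2) ^ 2 := by
    nlinarith [mul_nonneg (sub_nonneg.2 hXc) (by nlinarith : (0 : ℝ) ≤ 9 - 6 * (X + 3 * c ^ 2)),
      mul_nonneg (sub_nonneg.2 hXc)
        (by positivity : (0 : ℝ) ≤ X ^ 2 + X * (3 * c ^ 2) + (3 * c ^ 2) ^ 2)]
  nlinarith [mul_nonneg (sq_nonneg c) (sub_nonneg.2 hc2),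
    mul_nonneg (pow_two_nonneg (c ^ 2)) (sub_nonneg.2 hc2)]

theorem cos_pi_sub_arcsin_div_two_le {s c : ℝ} (hc : 0 ≤ c) (h : 1 - 4 * c ^ 2 ≤ √(1 - s ^ 2)) :
    cos ((π - arcsin s) / 2) ≤ √2 * c := by
  have hsq : sin (arcsin s / 2) ^ 2 ≤ (√2 * c) ^ 2 := by
    have hcos : cos (arcsin s) = 1 - 2 * sin (arcsin s / 2) ^ 2 := by
      conv_lhs => rw [← mul_div_cancel₀ (arcsin s) two_ne_zero, cos_two_mul', cos_sq']
      ring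
    rw [mul_pow, sq_sqrt zero_le_two]
    linarith [cos_arcsin s]
  rw [sub_div, cos_pi_div_two_sub]
  exact (le_abs_self _).trans (abs_le_of_sq_le_sq hsq (by positivity))

theorem stmt12_general (u : Fin 3 → EuclideanSpace ℝ (Fin 3)) (hu : ∀ i, ‖u i‖ = 1)
    (m : ℝ) (hm0 : 0 < m)
    (hdet : m ^ 3 ≤ |Matrix.det (Matrix.of fun i j => u i j)|)
    (ξ : EuclideanSpace ℝ (Fin 3)) (hξ : ‖ξ‖ = 1) :
    min (m ^ 3 / Real.sqrt 2)
        ((1 / Real.sqrt 2) * Real.cos ((π - Real.arcsin (m ^ 3)) / 2)) ≤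
      max (abs ⟪ξ, u 0⟫) (max (abs ⟪ξ, u 1⟫) (abs ⟪ξ, u 2⟫)) := by
  set c := max |⟪ξ, u 0⟫| (max |⟪ξ, u 1⟫| |⟪ξ, u 2⟫|)
  have hc i : |⟪ξ, u i⟫| ≤ c := by fin_cases i <;> simp [c]
  have hc₀ : 0 ≤ c := (abs_nonneg _).trans (hc 0)
  have hX : ∑ i, ⟪ξ, u i⟫ ^ 2 ≤ 3 * c ^ 2 := by
    have hsq i : ⟪ξ, u i⟫ ^ 2 ≤ c ^ 2 := sq_le_sq' (neg_le_of_abs_le (hc i)) (le_of_abs_le (hc i))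
    rw [Fin.sum_univ_three]
    linarith [hsq 0, hsq 1, hsq 2]
  have hdet_sq : (m ^ 3) ^ 2 ≤ (EuclideanSpace.basisFun (Fin 3) ℝ).toBasis.det u ^ 2 := by
    have hU : (Matrix.of fun i j => u i j) =
        ((EuclideanSpace.basisFun (Fin 3) ℝ).toBasis.toMatrix u)ᵀ := rfl
    rw [Module.Basis.det_apply, ← det_transpose, ← hU, ← sq_abs (det _)]
    exact pow_le_pow_left₀ (by positivity) hdet 2
  have hkey : 1 - 4 * c ^ 2 ≤ √(1 - (m ^ 3) ^ 2) := by
    rcases le_or_gt (1 / 2) c with hc_large | hc_small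
    · exact (by nlinarith : 1 - 4 * c ^ 2 ≤ 0).trans (sqrt_nonneg _)
    · exact le_sqrt_of_sq_le <| sq_one_sub_four_mul_sq_le
        (Finset.sum_nonneg fun i _ => sq_nonneg _) hX hc₀ hc_small.le
        (hdet_sq.trans ((EuclideanSpace.basisFun _ ℝ).sq_det_le (by simp) hu hξ))
  calc _ ≤ 1 / √2 * cos ((π - arcsin (m ^ 3)) / 2) := min_le_right _ _
    _ ≤ 1 / √2 * (√2 * c) := by gcongr; exact cos_pi_sub_arcsin_div_two_le hc₀ hkey
    _ = c := by field_simp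

/-- Let `u₁, u₂, u₃` be unit vectors in `ℝ³` whose scalar triple product
(the determinant of the matrix with rows `uᵢ`) has absolute value at least `m³` for
some `m ∈ (0,1]`.  Then every unit vector `ξ` satisfies
`max_i |ξ · u_i| ≥ min { m³/√2, (1/√2) cos((π - arcsin(m³))/2) }`. -/
theorem stmt12 (u : Fin 3 → EuclideanSpace ℝ (Fin 3)) (hu : ∀ i, ‖u i‖ = 1)
    (m : ℝ) (hm0 : 0 < m) (hm1 : m ≤ 1)
    (hdet : m ^ 3 ≤ |Matrix.det (Matrix.of fun i j => u i j)|)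
    (ξ : EuclideanSpace ℝ (Fin 3)) (hξ : ‖ξ‖ = 1) :
    min (m ^ 3 / Real.sqrt 2)
        ((1 / Real.sqrt 2) * Real.cos ((π - Real.arcsin (m ^ 3)) / 2)) ≤
      max (abs ⟪ξ, u 0⟫) (max (abs ⟪ξ, u 1⟫) (abs ⟪ξ, u 2⟫)) :=
  stmt12_general u hu m hm0 hdet ξ hξ
end
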